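/- arXiv:2306.16613 — 8 statements merged into one kernel-verified Lean document; each statement's English description precedes it below -/
import Mathlib

section
/- Let F : C ⥤ D, G : D ⥤ E and I : C ⥤ X be functors. If F is heavily I-separable and G is heavily separable, then the composite G ∘ F : C ⥤ E is heavily I-separable. -/
open CategoryTheory

/-- A functor `F : C ⥤ D` is *heavily `I`-separable* (heavy separability of the second kind)
if there is a natural transformation `P : Hom_D(F −, F −) ⟶ Hom_X(I −, I −)` of functors
`Cᵒᵖ × C ⥤ Set` such that `P (F.map f) = I.map f` and `P` is compatible with composition. -/
def HeavilyISeparable {C : Type*} [Category C] {D : Type*} [Category D]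
    {X : Type*} [Category X] (F : C ⥤ D) (I : C ⥤ X) : Prop :=
  ∃ P : ∀ a b : C, (F.obj a ⟶ F.obj b) → (I.obj a ⟶ I.obj b),
    (∀ (a' a b b' : C) (u : a' ⟶ a) (v : b ⟶ b') (h : F.obj a ⟶ F.obj b),
        P a' b' (F.map u ≫ h ≫ F.map v) = I.map u ≫ P a b h ≫ I.map v) ∧
    (∀ (a b : C) (f : a ⟶ b), P a b (F.map f) = I.map f) ∧
    (∀ (a b c : C) (f : F.obj a ⟶ F.obj b) (g : F.obj b ⟶ F.obj c),
        P a c (f ≫ g) = P a b f ≫ P b c g)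

/-- A functor `F : C ⥤ D` is *heavily separable* if it is heavily `𝟭 C`-separable. -/
def HeavilySeparable {C : Type*} [Category C] {D : Type*} [Category D] (F : C ⥤ D) : Prop :=
  HeavilyISeparable F (𝟭 C)

/-- If `F` is heavily `I`-separable and `G` is heavily separable, then `F ⋙ G`
is heavily `I`-separable. -/
theorem heavilyISeparable_comp {C D E X : Type*} [Category C] [Category D] [Category E]
    [Category X] (F : C ⥤ D) (G : D ⥤ E) (I : C ⥤ X)
    (hF : HeavilyISeparable F I) (hG : HeavilySeparable G) :
    HeavilyISeparable (F ⋙ G) I := by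
  obtain ⟨P, hP1, hP2, hP3⟩ := hF
  obtain ⟨Q, hQ1, hQ2, hQ3⟩ := hG
  refine ⟨fun a b h => P a b (Q (F.obj a) (F.obj b) h), ?_, ?_, ?_⟩
  · intro a' a b b' u v h
    have := hQ1 (F.obj a') (F.obj a) (F.obj b) (F.obj b') (F.map u) (F.map v) h
    simp only [Functor.id_map] at this
    simp only [Functor.comp_map, this, hP1]
  · intro a b f
    simp only [Functor.comp_map, hQ2, Functor.id_map, hP2]
  · intro a b c f g
    simp only [hQ3, hP3]
end

section
/- Let (F : C ⥤ D, G : D ⥤ C) be an adjoint pair with unit η : 1_C ⟶ G∘F and counit ε : F∘G ⟶ 1_D, and let I : C ⥤ X be a functor. Then F is heavily I-separable if and only if there exists a natural transformation γ : I∘(G∘F) ⟶ I (with components γ_a : I(G(F(a))) → I(a)) such that for every object a of C: (i) γ_a ∘ I(η_a) = id_{I(a)}, and (ii) γ_a ∘ γ_{G(F(a))} = γ_a ∘ I(G(ε_{F(a)})). -/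
open CategoryTheory

/-!
Given the projection `P`, the retraction is `γ_a := P(ε_{F a})`: the counit triangle turns
`γ_a ∘ I(η_a)` into `P(F(𝟙 a))`, and naturality of `ε` turns `γ_a ∘ I(G ε_{F a})` into
`P(ε_{F a} ∘ ε_{FGF a})`, which splits by multiplicativity of `P`. Conversely, `γ` gives
`P(h) := γ_b ∘ I(G h ∘ η_a)`, i.e. `γ` applied to the adjoint transpose of `h`; the two axioms of
`γ` say exactly that this `P` fixes `F`-images and is multiplicative.
-/

def HomProjNatural {C D X : Type*} [Category C] [Category D] [Category X] {F : C ⥤ D}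
    {I : C ⥤ X} (P : ∀ a b : C, (F.obj a ⟶ F.obj b) → (I.obj a ⟶ I.obj b)) : Prop :=
  ∀ (a' a b b' : C) (u : a' ⟶ a) (v : b ⟶ b') (h : F.obj a ⟶ F.obj b),
    P a' b' (F.map u ≫ h ≫ F.map v) = I.map u ≫ P a b h ≫ I.map v

namespace HomProjNatural

variable {C D X : Type*} [Category C] [Category D] [Category X] {F : C ⥤ D} {I : C ⥤ X}
  {P : ∀ a b : C, (F.obj a ⟶ F.obj b) → (I.obj a ⟶ I.obj b)}

theorem map_comp_left (hP : HomProjNatural P) {a' a b : C} (u : a' ⟶ a)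
    (h : F.obj a ⟶ F.obj b) : P a' b (F.map u ≫ h) = I.map u ≫ P a b h := by
  simpa using hP a' a b b u (𝟙 b) h

theorem comp_map_right (hP : HomProjNatural P) {a b b' : C} (h : F.obj a ⟶ F.obj b)
    (v : b ⟶ b') : P a b' (h ≫ F.map v) = P a b h ≫ I.map v := by
  simpa using hP a a b b' (𝟙 a) v h

end HomProjNatural

namespace CategoryTheory.Adjunction

variable {C D X : Type*} [Category C] [Category D] [Category X] {F : C ⥤ D} {G : D ⥤ C}
  (adj : F ⊣ G) {I : C ⥤ X}

section NatTransOfHomProj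

variable {P : ∀ a b : C, (F.obj a ⟶ F.obj b) → (I.obj a ⟶ I.obj b)} (hP : HomProjNatural P)

@[simps]
def natTransOfHomProj : F ⋙ G ⋙ I ⟶ I where
  app a := P _ a (adj.counit.app (F.obj a))
  naturality a b f := by
    dsimp only [Functor.comp_obj, Functor.comp_map]
    rw [← hP.map_comp_left, ← hP.comp_map_right, adj.counit_naturality]

theorem unit_comp_natTransOfHomProj (hF : ∀ (a b : C) (f : a ⟶ b), P a b (F.map f) = I.map f)
    (a : C) : I.map (adj.unit.app a) ≫ (adj.natTransOfHomProj hP).app a = 𝟙 (I.obj a) := by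
  calc I.map (adj.unit.app a) ≫ P _ a (adj.counit.app (F.obj a))
      _ = P a a (F.map (adj.unit.app a) ≫ adj.counit.app (F.obj a)) :=
        (hP.map_comp_left _ _).symm
      _ = P a a (F.map (𝟙 a)) := by rw [left_triangle_components, F.map_id]
      _ = 𝟙 (I.obj a) := by rw [hF, I.map_id]

theorem natTransOfHomProj_app_comp (hcomp : ∀ (a b c : C) (f : F.obj a ⟶ F.obj b)
      (g : F.obj b ⟶ F.obj c), P a c (f ≫ g) = P a b f ≫ P b c g) (a : C) :
    (adj.natTransOfHomProj hP).app (G.obj (F.obj a)) ≫ (adj.natTransOfHomProj hP).app a =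
      I.map (G.map (adj.counit.app (F.obj a))) ≫ (adj.natTransOfHomProj hP).app a := by
  simp only [natTransOfHomProj_app]
  rw [← hcomp, ← adj.counit_naturality]
  exact hP.map_comp_left _ _

end NatTransOfHomProj

section HomProjOfNatTrans

variable (γ : F ⋙ G ⋙ I ⟶ I)

def homProjOfNatTrans (a b : C) (h : F.obj a ⟶ F.obj b) : I.obj a ⟶ I.obj b :=
  I.map (adj.unit.app a ≫ G.map h) ≫ γ.app b

theorem homProjOfNatTrans_natural : HomProjNatural (adj.homProjOfNatTrans γ) := by
  intro a' a b b' u v h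
  have hγ : I.map (G.map (F.map v)) ≫ γ.app b' = γ.app b ≫ I.map v := γ.naturality v
  simp only [homProjOfNatTrans, Functor.map_comp, Category.assoc, hγ]
  rw [← I.map_comp_assoc, adj.unit_naturality u]
  simp

theorem homProjOfNatTrans_map (hη : ∀ a : C, I.map (adj.unit.app a) ≫ γ.app a = 𝟙 (I.obj a))
    {a b : C} (f : a ⟶ b) : adj.homProjOfNatTrans γ a b (F.map f) = I.map f := by
  rw [homProjOfNatTrans, adj.unit_naturality f, I.map_comp,
    Category.assoc, hη, Category.comp_id]

theorem app_comp_homProjOfNatTrans (hμ : ∀ a : C, γ.app (G.obj (F.obj a)) ≫ γ.app a =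
      I.map (G.map (adj.counit.app (F.obj a))) ≫ γ.app a)
    {b c : C} (g : F.obj b ⟶ F.obj c) :
    γ.app b ≫ adj.homProjOfNatTrans γ b c g = I.map (G.map g) ≫ γ.app c := by
  have hγ := γ.naturality (adj.unit.app b ≫ G.map g)
  dsimp only [Functor.comp_obj, Functor.comp_map, Functor.id_obj] at hγ
  have hg : F.map (adj.unit.app b ≫ G.map g) ≫ adj.counit.app (F.obj c) = g := by simp
  rw [homProjOfNatTrans, ← Category.assoc, ← hγ, Category.assoc, hμ, ← I.map_comp_assoc,
    ← G.map_comp, hg]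

theorem homProjOfNatTrans_comp (hμ : ∀ a : C, γ.app (G.obj (F.obj a)) ≫ γ.app a =
      I.map (G.map (adj.counit.app (F.obj a))) ≫ γ.app a)
    {a b c : C} (f : F.obj a ⟶ F.obj b) (g : F.obj b ⟶ F.obj c) :
    adj.homProjOfNatTrans γ a c (f ≫ g) =
      adj.homProjOfNatTrans γ a b f ≫ adj.homProjOfNatTrans γ b c g := by
  rw [homProjOfNatTrans, homProjOfNatTrans, Category.assoc, app_comp_homProjOfNatTrans _ _ hμ]
  simp only [Functor.map_comp, Category.assoc]

end HomProjOfNatTrans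

end CategoryTheory.Adjunction

/-- Rafael-type theorem for the left adjoint: `F` is heavily `I`-separable iff there is
`γ : I∘G∘F ⟶ I` with `γ ∘ Iη = id` and `γ ∘ (γ GF) = γ ∘ (IGεF)`. -/
theorem heavilyISeparable_leftAdjoint_iff {C D X : Type*} [Category C] [Category D]
    [Category X] (F : C ⥤ D) (G : D ⥤ C) (adj : F ⊣ G) (I : C ⥤ X) :
    HeavilyISeparable F I ↔
      ∃ γ : F ⋙ G ⋙ I ⟶ I,
        (∀ a : C, I.map (adj.unit.app a) ≫ γ.app a = 𝟙 (I.obj a)) ∧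
        (∀ a : C, γ.app (G.obj (F.obj a)) ≫ γ.app a =
            I.map (G.map (adj.counit.app (F.obj a))) ≫ γ.app a) := by
  constructor
  · rintro ⟨P, hP, hF, hcomp⟩
    exact ⟨adj.natTransOfHomProj hP, adj.unit_comp_natTransOfHomProj hP hF,
      adj.natTransOfHomProj_app_comp hP hcomp⟩
  · rintro ⟨γ, hη, hμ⟩
    exact ⟨adj.homProjOfNatTrans γ, adj.homProjOfNatTrans_natural γ,
      fun _ _ => adj.homProjOfNatTrans_map γ hη, fun _ _ _ => adj.homProjOfNatTrans_comp γ hμ⟩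
end

section
/- Let (F : C ⥤ D, G : D ⥤ C) be an adjoint pair with unit η : 1_C ⟶ G∘F and counit ε : F∘G ⟶ 1_D, and let J : D ⥤ Y be a functor. Then G is heavily J-separable if and only if there exists a natural transformation δ : J ⟶ J∘(F∘G) (with components δ_d : J(d) → J(F(G(d)))) such that for every object d of D: (i) J(ε_d) ∘ δ_d = id_{J(d)}, and (ii) δ_{F(G(d))} ∘ δ_d = J(F(η_{G(d)})) ∘ δ_d. -/
open CategoryTheory

/-- Rafael-type theorem for the right adjoint: `G` is heavily `J`-separable iff there is
`δ : J ⟶ J∘F∘G` with `Jε ∘ δ = id` and `(δ FG) ∘ δ = (JFηG) ∘ δ`. -/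
theorem heavilyISeparable_rightAdjoint_iff {C D Y : Type*} [Category C] [Category D]
    [Category Y] (F : C ⥤ D) (G : D ⥤ C) (adj : F ⊣ G) (J : D ⥤ Y) :
    HeavilyISeparable G J ↔
      ∃ δ : J ⟶ G ⋙ F ⋙ J,
        (∀ d : D, δ.app d ≫ J.map (adj.counit.app d) = 𝟙 (J.obj d)) ∧
        (∀ d : D, δ.app d ≫ δ.app (F.obj (G.obj d)) =
            δ.app d ≫ J.map (F.map (adj.unit.app (G.obj d)))) := by

  constructor
  · rintro ⟨P, hnat, hF, hmul⟩
    refine ⟨{ app := fun d => P d (F.obj (G.obj d)) (adj.unit.app (G.obj d)),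
              naturality := ?_ }, ?_, ?_⟩
    · intro d d' f
      dsimp
      rw [← hF d d' f, ← hF (F.obj (G.obj d)) (F.obj (G.obj d')) (F.map (G.map f)),
        ← hmul, ← hmul]
      congr 1
      have := adj.unit.naturality (G.map f)
      simpa using this.symm
    · intro d
      dsimp
      rw [← hF (F.obj (G.obj d)) d (adj.counit.app d), ← hmul,
        adj.right_triangle_components]
      simpa using hF d d (𝟙 d)
    · intro d
      dsimp
      rw [← hF (F.obj (G.obj d)) (F.obj (G.obj (F.obj (G.obj d))))
          (F.map (adj.unit.app (G.obj d))), ← hmul, ← hmul]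
      congr 1
      simpa using adj.unit.naturality (adj.unit.app (G.obj d))
  · rintro ⟨δ, h1, h2⟩
    refine ⟨fun a b h => δ.app a ≫ J.map (F.map h ≫ adj.counit.app b), ?_, ?_, ?_⟩
    · intro a' a b b' u v h
      have hn : J.map u ≫ δ.app a = δ.app a' ≫ J.map (F.map (G.map u)) := by
        simpa using δ.naturality u
      have hc : F.map (G.map v) ≫ adj.counit.app b' = adj.counit.app b ≫ v :=
        adj.counit.naturality v
      simp only [Functor.map_comp, Category.assoc]
      rw [reassoc_of% hn.symm, ← Functor.map_comp, hc]
      simp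
    · intro a b f
      have hc : F.map (G.map f) ≫ adj.counit.app b = adj.counit.app a ≫ f :=
        adj.counit.naturality f
      dsimp only
      rw [hc, J.map_comp, reassoc_of% (h1 a)]
    · intro a b c f g
      have hn : J.map (F.map f ≫ adj.counit.app b) ≫ δ.app b =
          δ.app (F.obj (G.obj a)) ≫ J.map (F.map (G.map (F.map f ≫ adj.counit.app b))) := by
        simpa using δ.naturality (F.map f ≫ adj.counit.app b)
      rw [Category.assoc, reassoc_of% hn, reassoc_of% (h2 a)]
      have hu : adj.unit.app (G.obj a) ≫ G.map (F.map f) = f ≫ adj.unit.app (G.obj b) := by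
        simpa using adj.unit.naturality f
      have kc : adj.unit.app (G.obj a) ≫ G.map (F.map f) ≫ G.map (adj.counit.app b) = f := by
        rw [← Category.assoc, hu, Category.assoc, adj.right_triangle_components,
          Category.comp_id]
      have key : J.map (F.map (adj.unit.app (G.obj a))) ≫ J.map (F.map (G.map (F.map f))) ≫
          J.map (F.map (G.map (adj.counit.app b))) = J.map (F.map f) := by
        rw [← J.map_comp, ← J.map_comp, ← F.map_comp, ← F.map_comp, kc]
      simp only [Functor.map_comp, Category.assoc]
      rw [reassoc_of% key]
end

section
/- Let φ : ℂ → M₂(ℝ) be the ring homomorphism given by φ(a+ib) = [[a, −b], [b, a]], let i : ℝ → ℂ be the inclusion, let φ_* : Mod-M₂(ℝ) ⥤ Mod-ℂ and i_* : Mod-ℂ ⥤ Mod-ℝ be the restriction of scalars functors on right module categories, and let φ^* be any functor left adjoint to φ_*. Then φ^* is heavily i_*-separable. -/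
open CategoryTheory

universe u

/-!
Up to isomorphism the left adjoint of `φ_*` is `M ↦ M²`, where `M₂(ℝ)` acts on row vectors
through the real structure of `M` alone: it is `i_*` followed by the Morita functor
`Mod-ℝ ⥤ Mod-M₂(ℝ)`. The unit is `m ↦ (m, m i)` and the counit is
`(y₀, y₁) ↦ y₀ E₀₀ + y₁ E₀₁`; one triangle identity is `E₀₀ + φ(i) E₀₁ = 1`.
Since the Morita functor is fully faithful, pulling a morphism `φ^* a ⟶ φ^* b` back along it
gives the required `P`.
-/

namespace HeavilyISeparable

variable {C : Type*} [Category C] {D : Type*} [Category D] {X : Type*} [Category X]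

theorem of_map_of_comp {F : C ⥤ D} {I : C ⥤ X}
    (P : ∀ a b : C, (F.obj a ⟶ F.obj b) → (I.obj a ⟶ I.obj b))
    (map : ∀ (a b : C) (f : a ⟶ b), P a b (F.map f) = I.map f)
    (comp : ∀ (a b c : C) (f : F.obj a ⟶ F.obj b) (g : F.obj b ⟶ F.obj c),
      P a c (f ≫ g) = P a b f ≫ P b c g) :
    HeavilyISeparable F I :=
  ⟨P, fun a' a b b' u v h => by rw [comp, comp, map, map], map, comp⟩

theorem of_iso {F G : C ⥤ D} {I : C ⥤ X} (α : F ≅ G) (h : HeavilyISeparable G I) :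
    HeavilyISeparable F I := by
  obtain ⟨P, -, map, comp⟩ := h
  refine of_map_of_comp (fun a b f => P a b (α.inv.app a ≫ f ≫ α.hom.app b)) ?_ ?_
  · intro a b f
    simp [map]
  · intro a b c f g
    simp [← comp]

theorem comp_of_fullyFaithful {I : C ⥤ X} {E : X ⥤ D} (hE : E.FullyFaithful) :
    HeavilyISeparable (I ⋙ E) I :=
  of_map_of_comp (fun _ _ => hE.preimage) (fun _ _ f => hE.preimage_map (I.map f))
    (fun _ _ _ => hE.preimage_comp)

end HeavilyISeparable

open MulOpposite

/-- On right modules `(Matrix ι ι R)ᵐᵒᵖ` acts on row vectors `ι → M`, through the transpose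
identification with `Matrix ι ι Rᵐᵒᵖ`. -/
noncomputable def ModuleCat.toMatrixModCatMop (R : Type*) (ι : Type) [Ring R] [Fintype ι]
    [DecidableEq ι] : ModuleCat.{u} Rᵐᵒᵖ ⥤ ModuleCat.{u} (Matrix ι ι R)ᵐᵒᵖ :=
  ModuleCat.toMatrixModCat Rᵐᵒᵖ ι ⋙ ModuleCat.restrictScalars RingEquiv.mopMatrix.symm.toRingHom

noncomputable def ModuleCat.fullyFaithfulToMatrixModCatMop (R : Type*) {ι : Type} [Ring R]
    [Fintype ι] [DecidableEq ι] (i : ι) : (ModuleCat.toMatrixModCatMop.{u} R ι).FullyFaithful :=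
  (ModuleCat.matrixEquivalence Rᵐᵒᵖ i).fullyFaithfulFunctor.comp
    (ModuleCat.restrictScalarsEquivalenceOfRingEquiv _).fullyFaithfulFunctor

section sumSmulSingle

variable (R : Type*) {n Y : Type*} [Semiring R] [Fintype n] [DecidableEq n] [AddCommMonoid Y]
  [Module (Matrix n n R)ᵐᵒᵖ Y]

def sumSmulSingle (i : n) (x : n → Y) : Y :=
  ∑ j, op (Matrix.single i j (1 : R)) • x j

lemma sumSmulSingle_add (i : n) (x y : n → Y) :
    sumSmulSingle R i (x + y) = sumSmulSingle R i x + sumSmulSingle R i y := by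
  simp only [sumSmulSingle, Pi.add_apply, smul_add, Finset.sum_add_distrib]

lemma map_sumSmulSingle {Z : Type*} [AddCommMonoid Z] [Module (Matrix n n R)ᵐᵒᵖ Z]
    (f : Y →ₗ[(Matrix n n R)ᵐᵒᵖ] Z) (i : n) (x : n → Y) :
    f (sumSmulSingle R i x) = sumSmulSingle R i (fun j => f (x j)) := by
  simp only [sumSmulSingle, map_sum, map_smul]

variable {R} in
lemma single_one_mul_eq_sum (A : Matrix n n R) (i k : n) :
    Matrix.single i k 1 * A = ∑ j, Matrix.scalar n (A k j) * Matrix.single i j 1 := by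
  simp only [Matrix.scalar_apply, ← Matrix.smul_eq_diagonal_mul, Matrix.smul_single, smul_eq_mul,
    mul_one]
  ext a b
  rcases eq_or_ne i a with rfl | h <;>
    simp [Matrix.single_apply, Matrix.mul_apply, Matrix.sum_apply, *]

lemma sumSmulSingle_smul (A : Matrix n n R) (i : n) (x : n → Y) :
    sumSmulSingle R i (fun j => ∑ k, op (Matrix.scalar n (A k j)) • x k) =
      op A • sumSmulSingle R i x := by
  simp only [sumSmulSingle, Finset.smul_sum, op_smul_op_smul, single_one_mul_eq_sum,
    Finset.op_sum, Finset.sum_smul]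
  exact Finset.sum_comm

end sumSmulSingle

lemma op_re_smul_add_op_im_smul {M : Type*} [AddCommGroup M] [Module ℂᵐᵒᵖ M] (c : ℂ) (m : M) :
    op (c.re : ℂ) • m + op (c.im : ℂ) • op Complex.I • m = op c • m := by
  rw [op_smul_op_smul, ← add_smul, ← MulOpposite.op_add, mul_comm, Complex.re_add_im]

noncomputable def complexMatrixExtendScalars :
    ModuleCat.{u} ℂᵐᵒᵖ ⥤ ModuleCat.{u} (Matrix (Fin 2) (Fin 2) ℝ)ᵐᵒᵖ :=
  ModuleCat.restrictScalars (RingHom.op Complex.ofRealHom) ⋙ ModuleCat.toMatrixModCatMop ℝ (Fin 2)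

namespace complexMatrixExtendScalars

open ModuleCat

lemma smul_apply {M : ModuleCat.{u} ℂᵐᵒᵖ} (A : (Matrix (Fin 2) (Fin 2) ℝ)ᵐᵒᵖ)
    (x : complexMatrixExtendScalars.obj M) (i : Fin 2) :
    (A • x) i = ∑ j, op ((A.unop j i : ℝ) : ℂ) • x j :=
  rfl

def pairI {M : ModuleCat.{u} ℂᵐᵒᵖ} (m : M) : complexMatrixExtendScalars.obj M :=
  ![m, op Complex.I • m]

lemma pairI_add {M : ModuleCat.{u} ℂᵐᵒᵖ} (m m' : M) : pairI (m + m') = pairI m + pairI m' := by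
  funext i
  fin_cases i
  · rfl
  · exact smul_add _ _ _

lemma sumSmulSingle_pairI {M : ModuleCat.{u} ℂᵐᵒᵖ} (x : complexMatrixExtendScalars.obj M) :
    sumSmulSingle ℝ 0 (fun j => pairI (x j)) = x := by
  funext i
  rw [sumSmulSingle, Fin.sum_univ_two]
  change (op (Matrix.single 0 0 1 : Matrix (Fin 2) (Fin 2) ℝ) • pairI (x 0)) i +
    (op (Matrix.single 0 1 1 : Matrix (Fin 2) (Fin 2) ℝ) • pairI (x 1)) i = x i
  rw [smul_apply, smul_apply]
  fin_cases i <;> simp [pairI, Fin.sum_univ_two, Matrix.single_apply] <;> exact zero_smul _ _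

variable {φ : ℂ →+* Matrix (Fin 2) (Fin 2) ℝ} (hφ : ∀ z : ℂ, φ z = !![z.re, -z.im; z.im, z.re])
include hφ

lemma smul_pairI {M : ModuleCat.{u} ℂᵐᵒᵖ} (w : ℂ) (m : M) :
    op (φ w) • pairI m = pairI (op w • m) := by
  funext i
  rw [smul_apply]
  fin_cases i
  · simp only [pairI, hφ, Fin.sum_univ_two, unop_op, Matrix.of_apply, Matrix.cons_val',
      Matrix.cons_val_zero, Matrix.cons_val_one, Matrix.cons_val_fin_one, Fin.zero_eta]
    exact op_re_smul_add_op_im_smul w m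
  · simp only [pairI, hφ, Fin.sum_univ_two, unop_op, Matrix.of_apply, Matrix.cons_val',
      Matrix.cons_val_zero, Matrix.cons_val_one, Matrix.cons_val_fin_one, Fin.mk_one]
    -- the second coordinate is the first one for `w i`
    have h := op_re_smul_add_op_im_smul (w * Complex.I) m
    rw [Complex.mul_I_re, Complex.mul_I_im, ← op_smul_op_smul] at h
    exact h

lemma phi_ofReal (r : ℝ) : φ r = Matrix.scalar (Fin 2) r := by
  ext i j; fin_cases i <;> fin_cases j <;> simp [hφ]

lemma sumSmulSingle_phi_smul {Y : Type*} [AddCommGroup Y]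
    [Module (Matrix (Fin 2) (Fin 2) ℝ)ᵐᵒᵖ Y] (A : Matrix (Fin 2) (Fin 2) ℝ) (x : Fin 2 → Y) :
    sumSmulSingle ℝ 0 (fun j => ∑ k, op (φ (A k j)) • x k) = op A • sumSmulSingle ℝ 0 x := by
  simp only [phi_ofReal hφ]
  exact sumSmulSingle_smul ℝ A 0 x

lemma single_smul_add_single_smul_phi_I {Y : Type*} [AddCommGroup Y]
    [Module (Matrix (Fin 2) (Fin 2) ℝ)ᵐᵒᵖ Y] (y : Y) :
    op (Matrix.single 0 0 1 : Matrix (Fin 2) (Fin 2) ℝ) • y +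
      op (Matrix.single 0 1 1 : Matrix (Fin 2) (Fin 2) ℝ) • op (φ Complex.I) • y = y := by
  have h : Matrix.single 0 0 1 + φ Complex.I * Matrix.single 0 1 1 = 1 := by
    rw [hφ]
    ext i j
    fin_cases i <;> fin_cases j <;> simp [Matrix.vecMul, dotProduct, Matrix.single_apply]
  rw [op_smul_op_smul, ← add_smul, ← MulOpposite.op_add, h, op_one, one_smul]

noncomputable def unit (M : ModuleCat.{u} ℂᵐᵒᵖ) :
    M ⟶ (restrictScalars (RingHom.op φ)).obj (complexMatrixExtendScalars.obj M) :=
  ofHom (Y := (restrictScalars (RingHom.op φ)).obj (complexMatrixExtendScalars.obj M))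
    { toFun := pairI
      map_add' := pairI_add
      map_smul' := fun ⟨w⟩ m => (smul_pairI hφ w m).symm }

noncomputable def counit (Y : ModuleCat.{u} (Matrix (Fin 2) (Fin 2) ℝ)ᵐᵒᵖ) :
    complexMatrixExtendScalars.obj ((restrictScalars (RingHom.op φ)).obj Y) ⟶ Y :=
  ofHom (X := complexMatrixExtendScalars.obj ((restrictScalars (RingHom.op φ)).obj Y))
    { toFun := sumSmulSingle (Y := Y) ℝ 0
      map_add' := fun x y => sumSmulSingle_add (Y := Y) ℝ 0 x y
      map_smul' := fun ⟨A⟩ x => sumSmulSingle_phi_smul (Y := Y) hφ A x }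

noncomputable def adjunction :
    complexMatrixExtendScalars.{u} ⊣ restrictScalars (RingHom.op φ) :=
  Adjunction.mkOfHomEquiv
    { homEquiv M Y :=
        { toFun f := unit hφ M ≫ (restrictScalars (RingHom.op φ)).map f
          invFun g := complexMatrixExtendScalars.map g ≫ counit hφ Y
          left_inv f := by
            ext x
            change sumSmulSingle ℝ 0 (fun j => f.hom (pairI (x j))) = f.hom x
            rw [← map_sumSmulSingle, sumSmulSingle_pairI]
          right_inv g := by
            ext m
            change sumSmulSingle ℝ 0 (fun j => g.hom (pairI m j)) = g.hom m
            rw [sumSmulSingle, Fin.sum_univ_two]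
            change op (Matrix.single 0 0 1 : Matrix (Fin 2) (Fin 2) ℝ) • g.hom m +
              op (Matrix.single 0 1 1 : Matrix (Fin 2) (Fin 2) ℝ) • g.hom (op Complex.I • m) =
                g.hom m
            rw [map_smul]
            exact single_smul_add_single_smul_phi_I hφ (g.hom m) }
      homEquiv_naturality_left_symm f g := by simp
      homEquiv_naturality_right f g := by simp }

end complexMatrixExtendScalars

/-- For `φ : ℂ → M₂(ℝ)`, `φ(a+ib) = [[a,-b],[b,a]]`, and the inclusion `i : ℝ → ℂ`,
the extension of scalars `φ^*` is heavily `i_*`-separable. -/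
theorem complex_to_matrix_heavilyISeparable
    (φ : ℂ →+* Matrix (Fin 2) (Fin 2) ℝ)
    (hφ : ∀ z : ℂ, φ z = !![z.re, -z.im; z.im, z.re])
    (φUpper : ModuleCat.{u} ℂᵐᵒᵖ ⥤ ModuleCat.{u} (Matrix (Fin 2) (Fin 2) ℝ)ᵐᵒᵖ)
    (adj : φUpper ⊣ ModuleCat.restrictScalars (RingHom.op φ)) :
    HeavilyISeparable φUpper
      (ModuleCat.restrictScalars (RingHom.op Complex.ofRealHom)) :=
  HeavilyISeparable.of_iso (adj.leftAdjointUniq (complexMatrixExtendScalars.adjunction hφ))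
    (HeavilyISeparable.comp_of_fullyFaithful (ModuleCat.fullyFaithfulToMatrixModCatMop ℝ 0))
end

section
/- Let φ : ℂ → M₂(ℝ) be the ring homomorphism given by φ(a+ib) = [[a, −b], [b, a]], let φ_* : Mod-M₂(ℝ) ⥤ Mod-ℂ be the restriction of scalars functor on right module categories, and let φ^* be any functor left adjoint to φ_*. Then φ^* is not heavily separable. -/
open CategoryTheory

universe u v w

/-!
A heavily separable functor `F` comes with a multiplicative retraction
`End (F X) → End X` of `F.map`. For `F ⊣ φ_*` with `φ : R → S`, the endomorphisms of
`F (R_R)` are determined by where they send the generator `η(1)`, so `S` maps multiplicatively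
into `End (F (R_R))`, compatibly with `F.map` on `End (R_R) ≃* R`. Composing yields a monoid
hom `E : S → R` with `E ∘ φ = id`. Into a commutative target, however, every monoid hom out of
`M₂(ℝ)` kills `-1`: with `J = [[0,-1],[1,0]]` and `g = diag(1,-1)` we have `J² = -1` and
`g² = (J g)² = 1`, so `E(-1) = E(J)² E(g)² = E(J g)² = 1`, whereas `E(φ(-1)) = -1`.
-/

theorem HeavilySeparable.exists_endMonoidHom {C : Type*} [Category C] {D : Type*} [Category D]
    {F : C ⥤ D} (hF : HeavilySeparable F) (X : C) :
    ∃ P : End (F.obj X) →* End X, ∀ f : End X, P (F.map f) = f := by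
  obtain ⟨P, -, hPF, hcomp⟩ := hF
  refine ⟨{ toFun := P X X, map_one' := ?_, map_mul' := fun f g => hcomp X X X g f }, hPF X X⟩
  simpa using hPF X X (𝟙 X)

namespace ModuleCat

open MulOpposite

variable (R : Type v) [Ring R]

abbrev rightRegular : ModuleCat.{max v u} Rᵐᵒᵖ := ModuleCat.of Rᵐᵒᵖ (ULift.{u} Rᵐᵒᵖ)

variable {R}

theorem rightRegular_hom_apply {M : ModuleCat.{max v u} Rᵐᵒᵖ} (f : rightRegular.{u} R ⟶ M)
    (x : ULift.{u} Rᵐᵒᵖ) : f x = x.down • f ⟨1⟩ := by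
  conv_lhs => rw [show x = x.down • (⟨1⟩ : ULift.{u} Rᵐᵒᵖ) from ULift.ext _ _ (mul_one _).symm]
  exact map_smul f.hom _ _

def rightRegularHomEquiv (M : ModuleCat.{max v u} Rᵐᵒᵖ) : (rightRegular.{u} R ⟶ M) ≃ M where
  toFun f := f ⟨1⟩
  invFun m := ofHom (LinearMap.toSpanSingleton Rᵐᵒᵖ M m ∘ₗ ULift.moduleEquiv.toLinearMap)
  left_inv f := by
    ext x
    exact (rightRegular_hom_apply f x).symm
  right_inv m := one_smul _ m

def endRightRegularEquiv : End (rightRegular.{u} R) ≃* R where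
  toEquiv := (rightRegularHomEquiv _).trans (Equiv.ulift.trans opEquiv.symm)
  map_mul' (f g : rightRegular.{u} R ⟶ rightRegular R) := by
    change unop (f (g ⟨1⟩)).down = unop (f ⟨1⟩).down * unop (g ⟨1⟩).down
    rw [rightRegular_hom_apply f]
    rfl

end ModuleCat

namespace CategoryTheory.Adjunction

open ModuleCat MulOpposite

variable {R : Type v} {S : Type w} [Ring R] [Ring S] {φ : R →+* S}
  {F : ModuleCat.{max v u} Rᵐᵒᵖ ⥤ ModuleCat.{max v u} Sᵐᵒᵖ}
  (adj : F ⊣ restrictScalars φ.op)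

noncomputable def generator : F.obj (rightRegular.{u} R) := adj.unit.app (rightRegular R) ⟨1⟩

noncomputable def homEquivGenerator (N : ModuleCat.{max v u} Sᵐᵒᵖ) :
    (F.obj (rightRegular.{u} R) ⟶ N) ≃ N :=
  (adj.homEquiv _ _).trans (rightRegularHomEquiv ((restrictScalars φ.op).obj N))

theorem homEquivGenerator_apply {N : ModuleCat.{max v u} Sᵐᵒᵖ}
    (f : F.obj (rightRegular.{u} R) ⟶ N) : adj.homEquivGenerator N f = f adj.generator :=
  rfl

theorem homEquivGenerator_symm_apply_generator {N : ModuleCat.{max v u} Sᵐᵒᵖ} (n : N) :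
    (adj.homEquivGenerator N).symm n adj.generator = n :=
  (adj.homEquivGenerator_apply _).symm.trans (Equiv.apply_symm_apply _ n)

-- Under `F (R_R) ≅ S_S`, generator ↦ `1`, this is left multiplication by `s`.
noncomputable def leftMulEnd : S →* End (F.obj (rightRegular.{u} R)) where
  toFun s := (adj.homEquivGenerator _).symm (MulOpposite.op s • adj.generator)
  map_one' := by
    apply (adj.homEquivGenerator _).injective
    rw [Equiv.apply_symm_apply, op_one, one_smul, End.one_def, homEquivGenerator_apply]
    rfl
  map_mul' s t := by
    apply (adj.homEquivGenerator _).injective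
    rw [End.mul_def, homEquivGenerator_apply, homEquivGenerator_apply, ConcreteCategory.comp_apply,
      homEquivGenerator_symm_apply_generator, homEquivGenerator_symm_apply_generator, map_smul,
      homEquivGenerator_symm_apply_generator, op_mul, mul_smul]

theorem homEquivGenerator_leftMulEnd (s : S) :
    adj.homEquivGenerator _ (adj.leftMulEnd s) = MulOpposite.op s • adj.generator :=
  Equiv.apply_symm_apply _ _

theorem leftMulEnd_apply_map (r : R) :
    adj.leftMulEnd (φ r) = F.map (endRightRegularEquiv.symm r) := by
  apply (adj.homEquivGenerator _).injective
  rw [homEquivGenerator_leftMulEnd, homEquivGenerator_apply]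
  set f : rightRegular.{u} R ⟶ rightRegular R := endRightRegularEquiv.symm r
  have hf : f ⟨1⟩ = MulOpposite.op r • (⟨1⟩ : ULift.{u} Rᵐᵒᵖ) :=
    ULift.ext _ _ ((one_mul _).trans (mul_one _).symm)
  have hnat : adj.unit.app _ (f ⟨1⟩) = F.map f adj.generator :=
    ConcreteCategory.congr_hom (adj.unit.naturality f) ⟨1⟩
  rw [← hnat, hf, map_smul]
  rfl

end CategoryTheory.Adjunction

theorem CategoryTheory.Adjunction.exists_monoidHom_leftInverse_of_heavilySeparable
    {R : Type v} {S : Type w} [Ring R] [Ring S] {φ : R →+* S}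
    {F : ModuleCat.{max v u} Rᵐᵒᵖ ⥤ ModuleCat.{max v u} Sᵐᵒᵖ}
    (adj : F ⊣ ModuleCat.restrictScalars φ.op) (hF : HeavilySeparable F) :
    ∃ E : S →* R, Function.LeftInverse E φ := by
  obtain ⟨P, hP⟩ := HeavilySeparable.exists_endMonoidHom hF (ModuleCat.rightRegular.{u} R)
  refine ⟨ModuleCat.endRightRegularEquiv.toMonoidHom.comp (P.comp adj.leftMulEnd), fun r => ?_⟩
  change ModuleCat.endRightRegularEquiv (P (adj.leftMulEnd (φ r))) = r
  rw [leftMulEnd_apply_map, hP, MulEquiv.apply_symm_apply]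

theorem MonoidHom.map_neg_one_of_matrix_fin_two {K M : Type*} [Ring K] [CommMonoid M]
    (E : Matrix (Fin 2) (Fin 2) K →* M) : E (-1) = 1 := by
  let J : Matrix (Fin 2) (Fin 2) K := !![0, -1; 1, 0]
  let g : Matrix (Fin 2) (Fin 2) K := !![1, 0; 0, -1]
  have hJ : J * J = -1 := by
    ext i j; fin_cases i <;> fin_cases j <;> simp [J]
  have hg : g * g = 1 := by
    ext i j; fin_cases i <;> fin_cases j <;> simp [g]
  have hJg : (J * g) * (J * g) = 1 := by
    ext i j; fin_cases i <;> fin_cases j <;> simp [J, g]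
  calc E (-1) = E (J * J) * E (g * g) := by rw [hJ, hg, map_one, mul_one]
    _ = E ((J * g) * (J * g)) := by simp only [map_mul]; ac_rfl
    _ = 1 := by rw [hJg, map_one]

theorem complex_to_matrix_not_heavilySeparable_general
    (φ : ℂ →+* Matrix (Fin 2) (Fin 2) ℝ)
    (φUpper : ModuleCat.{u} ℂᵐᵒᵖ ⥤ ModuleCat.{u} (Matrix (Fin 2) (Fin 2) ℝ)ᵐᵒᵖ)
    (adj : φUpper ⊣ ModuleCat.restrictScalars (RingHom.op φ)) :
    ¬ HeavilySeparable φUpper := by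
  intro hF
  obtain ⟨E, hE⟩ := adj.exists_monoidHom_leftInverse_of_heavilySeparable hF
  have h := hE (-1)
  rw [map_neg, map_one, E.map_neg_one_of_matrix_fin_two] at h
  norm_num at h

/-- For `φ : ℂ → M₂(ℝ)`, `φ(a+ib) = [[a,-b],[b,a]]`, the extension of scalars `φ^*`
is not heavily separable. -/
theorem complex_to_matrix_not_heavilySeparable
    (φ : ℂ →+* Matrix (Fin 2) (Fin 2) ℝ)
    (hφ : ∀ z : ℂ, φ z = !![z.re, -z.im; z.im, z.re])
    (φUpper : ModuleCat.{u} ℂᵐᵒᵖ ⥤ ModuleCat.{u} (Matrix (Fin 2) (Fin 2) ℝ)ᵐᵒᵖ)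
    (adj : φUpper ⊣ ModuleCat.restrictScalars (RingHom.op φ)) :
    ¬ HeavilySeparable φUpper :=
  complex_to_matrix_not_heavilySeparable_general φ φUpper adj
end

section
/- Let R be a commutative ring, S a ring, and φ : R → S a ring homomorphism whose image lies in the center of S. Let ψ : Q → R be any ring homomorphism, and suppose α : S → R is an additive, right Q-linear map (where Q acts on R via ψ and on S via φ∘ψ) satisfying α(φ(r)) = r for all r ∈ R and α(s₁·φ(α(s₂))) = α(s₁ s₂) for all s₁, s₂ ∈ S. Then α is a ring homomorphism; in particular α(s₁ s₂) = α(s₁)α(s₂) for all s₁, s₂ ∈ S and there exists a ring homomorphism splitting of φ. -/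
universe u

/-- If `R` is commutative, `φ : R → S` lands in the center of `S`, and `α : S → R` is an
additive right `Q`-linear map with `α ∘ φ = id` and `α(s₁·φ(α s₂)) = α(s₁ s₂)`, then `α` is
multiplicative; in particular it gives a ring homomorphism splitting `φ`. -/
theorem alpha_ringHom_of_central {Q R S : Type u} [Ring Q] [CommRing R] [Ring S]
    (ψ : Q →+* R) (φ : R →+* S) (hcentral : ∀ (r : R) (s : S), φ r * s = s * φ r)
    (α : S →+ R)
    (hQlin : ∀ (s : S) (q : Q), α (s * φ (ψ q)) = α s * ψ q)
    (hsplit : ∀ r : R, α (φ r) = r)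
    (hheavy : ∀ s₁ s₂ : S, α (s₁ * φ (α s₂)) = α (s₁ * s₂)) :
    (∀ s₁ s₂ : S, α (s₁ * s₂) = α s₁ * α s₂) ∧
      ∃ β : S →+* R, (⇑β = ⇑α) ∧ β.comp φ = RingHom.id R := by
  have hmul : ∀ s₁ s₂ : S, α (s₁ * s₂) = α s₁ * α s₂ := by
    intro s₁ s₂
    calc α (s₁ * s₂) = α (s₁ * φ (α s₂)) := (hheavy s₁ s₂).symm
      _ = α (φ (α s₂) * s₁) := by rw [hcentral]
      _ = α (φ (α s₂) * φ (α s₁)) := (hheavy _ _).symm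
      _ = α (φ (α s₂ * α s₁)) := by rw [map_mul φ]
      _ = α s₂ * α s₁ := hsplit _
      _ = α s₁ * α s₂ := mul_comm _ _
  refine ⟨hmul, ?_⟩
  refine ⟨⟨⟨⟨⇑α, by simpa using hsplit 1⟩, hmul⟩, map_zero α, map_add α⟩, rfl, ?_⟩
  ext r
  simpa using hsplit r
end

section
/- Let L ⊣ R be an adjoint pair of endofunctors of a category C. Suppose (L, Δ, ϵ) is a comonad structure on L, and equip R with the monad structure (R, μ, ι), where μ : R∘R ⟶ R is the mate (conjugate) of Δ : L ⟶ L∘L under the adjunctions L ⊣ R and L∘L ⊣ R∘R, and ι : 1_C ⟶ R is the mate of ϵ : L ⟶ 1_C. Let (I, J) be an adjoint pair of endofunctors of C such that I∘L = L∘I, IΔ = ΔI, and Iϵ = ϵI. Then the cofree coalgebra functor F^L : C ⥤ C^L (x ↦ (L(x), Δ_x)) into the Eilenberg–Moore category of the comonad is I-separable if and only if the free algebra functor F_R : C ⥤ C_R (x ↦ (R(x), μ_x)) into the Eilenberg–Moore category of the monad is J-separable. -/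
open CategoryTheory

/-- A functor `F : C ⥤ D` is *`I`-separable* (separable of the second kind) if there is a
natural transformation `P : Hom_D(F −, F −) ⟶ Hom_X(I −, I −)` of functors `Cᵒᵖ × C ⥤ Set`
such that `P (F.map f) = I.map f` for all `f`. -/
def ISeparable {C : Type*} [Category C] {D : Type*} [Category D]
    {X : Type*} [Category X] (F : C ⥤ D) (I : C ⥤ X) : Prop :=
  ∃ P : ∀ a b : C, (F.obj a ⟶ F.obj b) → (I.obj a ⟶ I.obj b),
    (∀ (a' a b b' : C) (u : a' ⟶ a) (v : b ⟶ b') (h : F.obj a ⟶ F.obj b),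
        P a' b' (F.map u ≫ h ≫ F.map v) = I.map u ≫ P a b h ≫ I.map v) ∧
    (∀ (a b : C) (f : a ⟶ b), P a b (F.map f) = I.map f)

universe v u

/-!
By Rafael's theorem for separability of the second kind, a left adjoint `F` (unit `η`) is
`I`-separable iff `Iη` is a split mono of functors, and a right adjoint `G` (counit `ε`) is
`I`-separable iff `Iε` is a split epi. So `F^L` is `I`-separable iff `Iε` splits, i.e. (as
`IL = LI`, `Iε = εI`) iff `εI : LI ⟶ I` splits, and `F_R` is `J`-separable iff `Jη` splits.
Conjugation along `LI ⊣ JR` and `I ⊣ J` reverses composition, so it exchanges split epis and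
split monos, and it sends `εI` to `Jη` because `η` is the conjugate of `ε`.
-/

open Functor

namespace CategoryTheory

namespace Adjunction

variable {C D X : Type*} [Category C] [Category D] [Category X]

theorem iSeparable_left_iff_isSplitMono {F : C ⥤ D} {G : D ⥤ C} (adj : F ⊣ G) (I : C ⥤ X) :
    ISeparable F I ↔ IsSplitMono (whiskerRight adj.unit I) := by
  constructor
  · rintro ⟨P, hPnat, hPmap⟩
    have hP_left {a b c : C} (u : a ⟶ b) (h : F.obj b ⟶ F.obj c) :
        P a c (F.map u ≫ h) = I.map u ≫ P b c h := by
      simpa using hPnat a b c c u (𝟙 c) h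
    have hP_right {a b c : C} (h : F.obj a ⟶ F.obj b) (v : b ⟶ c) :
        P a c (h ≫ F.map v) = P a b h ≫ I.map v := by
      simpa using hPnat a a b c (𝟙 a) v h
    refine IsSplitMono.mk' ⟨{ app b := P _ b (adj.counit.app (F.obj b)), naturality := ?_ }, ?_⟩
    · intro b b' v
      dsimp
      rw [← hP_left, adj.counit_naturality, hP_right]
    · ext b
      dsimp
      rw [← hP_left, adj.left_triangle_components, ← F.map_id, hPmap, I.map_id]
  · intro _
    set ν := retraction (whiskerRight adj.unit I)
    have hν (b : C) : I.map (adj.unit.app b) ≫ ν.app b = 𝟙 (I.obj b) :=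
      NatTrans.congr_app (IsSplitMono.id (whiskerRight adj.unit I)) b
    refine ⟨fun a b h => I.map (adj.homEquiv a (F.obj b) h) ≫ ν.app b, ?_, ?_⟩
    · intro a' a b b' u v h
      have hν_nat := ν.naturality v
      dsimp at hν_nat
      simp only [adj.homEquiv_naturality_left, adj.homEquiv_naturality_right, I.map_comp,
        Category.assoc, hν_nat]
    · intro a b f
      dsimp only
      rw [adj.homEquiv_unit, adj.unit_naturality, I.map_comp, Category.assoc, hν,
        Category.comp_id]

theorem iSeparable_right_iff_isSplitEpi {F : C ⥤ D} {G : D ⥤ C} (adj : F ⊣ G) (I : D ⥤ X) :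
    ISeparable G I ↔ IsSplitEpi (whiskerRight adj.counit I) := by
  constructor
  · rintro ⟨P, hPnat, hPmap⟩
    have hP_left {a b c : D} (u : a ⟶ b) (h : G.obj b ⟶ G.obj c) :
        P a c (G.map u ≫ h) = I.map u ≫ P b c h := by
      simpa using hPnat a b c c u (𝟙 c) h
    have hP_right {a b c : D} (h : G.obj a ⟶ G.obj b) (v : b ⟶ c) :
        P a c (h ≫ G.map v) = P a b h ≫ I.map v := by
      simpa using hPnat a a b c (𝟙 a) v h
    refine IsSplitEpi.mk' ⟨{ app a := P a _ (adj.unit.app (G.obj a)), naturality := ?_ }, ?_⟩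
    · intro a a' u
      dsimp
      rw [← hP_left, ← adj.unit_naturality, hP_right]
    · ext a
      dsimp
      rw [← hP_right, adj.right_triangle_components, ← G.map_id, hPmap, I.map_id]
  · intro _
    set σ := section_ (whiskerRight adj.counit I)
    have hσ (a : D) : σ.app a ≫ I.map (adj.counit.app a) = 𝟙 (I.obj a) :=
      NatTrans.congr_app (IsSplitEpi.id (whiskerRight adj.counit I)) a
    refine ⟨fun a b h => σ.app a ≫ I.map ((adj.homEquiv (G.obj a) b).symm h), ?_, ?_⟩
    · intro a' a b b' u v h
      have hσ_nat := σ.naturality u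
      dsimp at hσ_nat ⊢
      rw [adj.homEquiv_naturality_left_symm, adj.homEquiv_naturality_right_symm]
      simp only [I.map_comp, Category.assoc, reassoc_of% hσ_nat]
    · intro a b f
      dsimp only
      rw [adj.homEquiv_counit, adj.counit_naturality, I.map_comp, reassoc_of% hσ]

end Adjunction

theorem isSplitEpi_iff_of_heq {C : Type*} [Category C] {A A' B B' : C} {f : A ⟶ B}
    {g : A' ⟶ B'} (hA : A = A') (hB : B = B') (h : HEq f g) : IsSplitEpi f ↔ IsSplitEpi g := by
  subst hA hB
  cases h
  rfl

theorem isSplitEpi_iff_isSplitMono_conjugateEquiv {C D : Type*} [Category C] [Category D]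
    {L₁ L₂ : C ⥤ D} {R₁ R₂ : D ⥤ C} (adj₁ : L₁ ⊣ R₁) (adj₂ : L₂ ⊣ R₂) (α : L₂ ⟶ L₁) :
    IsSplitEpi α ↔ IsSplitMono (conjugateEquiv adj₁ adj₂ α) := by
  constructor
  · intro _
    exact IsSplitMono.mk' ⟨conjugateEquiv adj₂ adj₁ (section_ α),
      conjugateEquiv_comm adj₁ adj₂ (IsSplitEpi.id α)⟩
  · intro _
    set ρ := retraction (conjugateEquiv adj₁ adj₂ α)
    refine IsSplitEpi.mk' ⟨(conjugateEquiv adj₂ adj₁).symm ρ, ?_⟩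
    apply (conjugateEquiv adj₁ adj₁).injective
    rw [← conjugateEquiv_comp adj₁ adj₂ adj₁, Equiv.apply_symm_apply, IsSplitMono.id,
      conjugateEquiv_id]

end CategoryTheory

theorem cofree_ISeparable_iff_free_JSeparable_general {C : Type u} [Category.{v} C]
    (L : Comonad C) (R : Monad C) (adj : L.toFunctor ⊣ R.toFunctor)
    (hη : R.η = conjugateEquiv (Adjunction.id (C := C)) adj L.ε)
    (I J : C ⥤ C) (adjIJ : I ⊣ J)
    (hIL : I ⋙ L.toFunctor = L.toFunctor ⋙ I)
    (hIε : HEq (Functor.whiskerRight L.ε I) (Functor.whiskerLeft I L.ε)) :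
    ISeparable L.cofree I ↔ ISeparable R.free J := by
  have hcounit : HEq (whiskerRight L.adj.counit I) (whiskerLeft I L.ε) :=
    (heq_of_eq (congrArg (whiskerRight · I) L.adj_counit)).trans hIε
  calc ISeparable L.cofree I ↔ IsSplitEpi (whiskerRight L.adj.counit I) :=
        L.adj.iSeparable_right_iff_isSplitEpi I
    _ ↔ IsSplitEpi (whiskerLeft I L.ε) := isSplitEpi_iff_of_heq hIL.symm rfl hcounit
    _ ↔ IsSplitMono (conjugateEquiv (adjIJ.comp .id) (adjIJ.comp adj) (whiskerLeft I L.ε)) :=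
        isSplitEpi_iff_isSplitMono_conjugateEquiv _ _ _
    _ ↔ IsSplitMono (whiskerRight R.η J) := by rw [conjugateEquiv_whiskerLeft, hη]
    _ ↔ ISeparable R.free J := by rw [R.adj.iSeparable_left_iff_isSplitMono, R.adj_unit]; rfl

/-- Let `L ⊣ R` with `L` a comonad whose mate monad structure is carried by `R`
(`μ` the conjugate of `δ`, `η` the conjugate of `ε`), and let `I ⊣ J` be an adjoint pair of
endofunctors with `I` commuting with the comonad structure of `L`. Then the cofree
coalgebra functor `F^L` is `I`-separable iff the free algebra functor `F_R` is
`J`-separable. -/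
theorem cofree_ISeparable_iff_free_JSeparable {C : Type u} [Category.{v} C]
    (L : Comonad C) (R : Monad C) (adj : L.toFunctor ⊣ R.toFunctor)
    (hμ : R.μ = conjugateEquiv (adj.comp adj) adj L.δ)
    (hη : R.η = conjugateEquiv (Adjunction.id (C := C)) adj L.ε)
    (I J : C ⥤ C) (adjIJ : I ⊣ J)
    (hIL : I ⋙ L.toFunctor = L.toFunctor ⋙ I)
    (hIδ : HEq (Functor.whiskerRight L.δ I) (Functor.whiskerLeft I L.δ))
    (hIε : HEq (Functor.whiskerRight L.ε I) (Functor.whiskerLeft I L.ε)) :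
    ISeparable L.cofree I ↔ ISeparable R.free J :=
  cofree_ISeparable_iff_free_JSeparable_general L R adj hη I J adjIJ hIL hIε
end

section
/- Let L and I be endofunctors of a category C with I∘L = L∘I, and suppose I is full. Then every natural transformation δ : I ⟶ I∘L (with components δ_a : I(a) → I(L(a)) = L(I(a))) satisfies L(δ_a) ∘ δ_a = δ_{L(a)} ∘ δ_a for every object a of C (i.e., Lδ ∘ δ = δL ∘ δ as natural transformations I ⟶ I∘L∘L). -/
open CategoryTheory

universe v u

/-- If `L` and `I` are endofunctors with `I ⋙ L = L ⋙ I` and `I` is full, then every natural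
transformation `δ : I ⟶ L ⋙ I` (components `δ_a : I(a) ⟶ I(L(a)) = L(I(a))`) satisfies
`L(δ_a) ∘ δ_a = δ_{L(a)} ∘ δ_a` for every object `a` (identifying `I(L(−))` with `L(I(−))`
via the equality `I ⋙ L = L ⋙ I`). -/
theorem natTrans_comp_eq_of_full {C : Type u} [Category.{v} C]
    (L I : C ⥤ C) (hIL : I ⋙ L = L ⋙ I) (hfull : I.Full)
    (δ : I ⟶ L ⋙ I) (a : C) :
    δ.app a ≫ eqToHom (Functor.congr_obj hIL a).symm ≫ L.map (δ.app a) ≫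
        eqToHom (Functor.congr_obj hIL (L.obj a)) =
      δ.app a ≫ δ.app (L.obj a) := by
  obtain ⟨f, hf⟩ := hfull.map_surjective (δ.app a)
  have nat : I.map f ≫ δ.app (L.obj a) = δ.app a ≫ (L ⋙ I).map f := δ.naturality f
  have key : (I ⋙ L).map f =
      eqToHom (Functor.congr_obj hIL a) ≫ (L ⋙ I).map f ≫
        eqToHom (Functor.congr_obj hIL (L.obj a)).symm := Functor.congr_hom hIL f
  have : L.map (δ.app a) = (I ⋙ L).map f := by rw [← hf]; rfl
  rw [this, key]
  simp only [eqToHom_trans_assoc, eqToHom_refl, Category.id_comp, Category.assoc,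
    eqToHom_trans, Category.comp_id]
  rw [← nat, hf]
end
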